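/- arXiv:1608.01559 — 5 statements merged into one kernel-verified Lean document; each statement's English description precedes it below -/
import Mathlib

section
/- Let C be a category with pullbacks and binary coproducts in which every binary coproduct cocone is stable under pullback. Let L be a pullback of the two coproduct injections inl : X → X ⨿ Y and inr : Y → X ⨿ Y. Then any two parallel morphisms f₁, f₂ : L → Z with the same codomain are equal; in particular, if C has an initial object 0, the unique morphism 0 → L is an epimorphism. -/
/-!
Pulling the coproduct `X ⨿ Y` back along `inr` splits `Y` as a coproduct of `L` and
`pullback inr inr`, and the injection of the latter is split epi (the diagonal is a section).
A copairing out of such a coproduct is therefore determined by its value on the second summand,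
so for `f : L ⟶ Z` the copairing of `f ≫ inl` and `inr` into `Z ⨿ pullback inr inr` does not
depend on `f`. Since pullback-stable coproduct injections are monic, neither does `f`.
-/

open CategoryTheory CategoryTheory.Limits

namespace CategoryTheory.Limits

theorem eq_of_isColimit_of_isSplitEpi_inr {C : Type*} [Category C] {A B S Z : C}
    [HasBinaryCoproduct Z B] [Mono (coprod.inl : Z ⟶ Z ⨿ B)] {i₁ : A ⟶ S} {i₂ : B ⟶ S}
    (hc : IsColimit (BinaryCofan.mk i₁ i₂)) [IsSplitEpi i₂] (f₁ f₂ : A ⟶ Z) : f₁ = f₂ := by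
  let d (f : A ⟶ Z) : S ⟶ Z ⨿ B := BinaryCofan.IsColimit.desc hc (f ≫ coprod.inl) coprod.inr
  have d_eq : ∀ f, d f = section_ i₂ ≫ coprod.inr := fun f => by
    calc d f = (section_ i₂ ≫ i₂) ≫ d f := by rw [IsSplitEpi.id, Category.id_comp]
      _ = section_ i₂ ≫ coprod.inr := by
        rw [Category.assoc]
        exact congrArg _ (BinaryCofan.IsColimit.inr_desc hc _ _)
  have inl_d : ∀ f, i₁ ≫ d f = f ≫ coprod.inl := fun f => BinaryCofan.IsColimit.inl_desc hc _ _
  rw [← cancel_mono (coprod.inl : Z ⟶ Z ⨿ B), ← inl_d, ← inl_d, d_eq, d_eq]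

variable (C : Type*) [Category C] [HasPullbacks C]

def PullbackStableBinaryCoproducts : Prop :=
  ∀ {X Y S : C} (inl : X ⟶ S) (inr : Y ⟶ S),
    Nonempty (IsColimit (BinaryCofan.mk inl inr)) →
    ∀ {Z : C} (f : Z ⟶ S),
      Nonempty (IsColimit (BinaryCofan.mk (pullback.snd inl f) (pullback.snd inr f)))

variable {C}

theorem PullbackStableBinaryCoproducts.mono_inl (hC : PullbackStableBinaryCoproducts C)
    {X Y S : C} {inl : X ⟶ S} {inr : Y ⟶ S} (hc : IsColimit (BinaryCofan.mk inl inr)) :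
    Mono inl := by
  constructor
  intro W u v huv
  obtain ⟨hP⟩ := hC inl inr ⟨hc⟩ (u ≫ inl)
  let d : W ⟶ X := BinaryCofan.IsColimit.desc hP (pullback.fst inl (u ≫ inl))
    (pullback.snd inr (u ≫ inl) ≫ u)
  have hd : pullback.snd inl (u ≫ inl) ≫ d = pullback.fst inl (u ≫ inl) :=
    BinaryCofan.IsColimit.inl_desc hP _ _
  -- Each such `w` is recovered from `d` along the section `pullback.lift w (𝟙 W)` of `snd`.
  have eq_d : ∀ w : W ⟶ X, w ≫ inl = u ≫ inl → w = d := fun w hw => by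
    let s := pullback.lift w (𝟙 W) (by rw [hw, Category.id_comp])
    calc w = s ≫ pullback.fst _ _ := (pullback.lift_fst _ _ _).symm
      _ = s ≫ pullback.snd _ _ ≫ d := by rw [hd]
      _ = d := by rw [pullback.lift_snd_assoc, Category.id_comp]
  exact (eq_d u rfl).trans (eq_d v huv.symm).symm

theorem PullbackStableBinaryCoproducts.hom_ext_pullback [HasBinaryCoproducts C]
    (hC : PullbackStableBinaryCoproducts C)
    {X Y S Z : C} {inl : X ⟶ S} {inr : Y ⟶ S} (hc : IsColimit (BinaryCofan.mk inl inr))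
    (f₁ f₂ : pullback inl inr ⟶ Z) : f₁ = f₂ := by
  obtain ⟨hY⟩ := hC inl inr ⟨hc⟩ inr
  have := hC.mono_inl (coprodIsCoprod Z (pullback inr inr))
  exact eq_of_isColimit_of_isSplitEpi_inr hY f₁ f₂

end CategoryTheory.Limits

/-- In a category with pullbacks and binary coproducts in which every
binary coproduct cocone is stable under pullback, if `L` is a pullback of the two
coproduct injections `coprod.inl : X ⟶ X ⨿ Y` and `coprod.inr : Y ⟶ X ⨿ Y`, then any
two parallel morphisms out of `L` are equal; in particular, if the category has an
initial object, the unique morphism `⊥_ C ⟶ L` is an epimorphism. -/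
theorem pullback_of_coprod_inj_subterminal {C : Type*} [Category C]
    [HasPullbacks C] [HasBinaryCoproducts C] [HasInitial C]
    (hstable : ∀ {X Y S : C} (inl : X ⟶ S) (inr : Y ⟶ S),
      Nonempty (IsColimit (BinaryCofan.mk inl inr)) →
      ∀ {Z : C} (f : Z ⟶ S),
        Nonempty (IsColimit (BinaryCofan.mk (pullback.snd inl f) (pullback.snd inr f))))
    {X Y L : C} (a : L ⟶ X) (b : L ⟶ Y)
    (comm : a ≫ (coprod.inl : X ⟶ X ⨿ Y) = b ≫ coprod.inr)
    (hL : Nonempty (IsLimit (PullbackCone.mk a b comm))) :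
    (∀ (Z : C) (f₁ f₂ : L ⟶ Z), f₁ = f₂) ∧ Epi (initial.to L) := by
  obtain ⟨hL⟩ := hL
  let e := IsLimit.conePointUniqueUpToIso (pullbackIsPullback coprod.inl coprod.inr) hL
  have hom_ext : ∀ (Z : C) (f₁ f₂ : L ⟶ Z), f₁ = f₂ := fun Z f₁ f₂ =>
    (cancel_epi e.hom).1
      (PullbackStableBinaryCoproducts.hom_ext_pullback hstable (coprodIsCoprod X Y) _ _)
  exact ⟨hom_ext, ⟨fun g h _ => hom_ext _ g h⟩⟩
end

section
/- Let C be a balanced category with pullbacks, with binary coproducts all of whose coproduct cocones are stable under pullback, and with a strict initial object 0 (every morphism with codomain 0 is an isomorphism). Then binary coproducts in C are disjoint: for any objects X and Y, the pullback of the coproduct injections inl : X → X ⨿ Y and inr : Y → X ⨿ Y is an initial object. -/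
/-!
Let `L` be the intersection of the injections of `X ⨿ Y`. Pulling the coproduct back along
`L ⟶ X ⨿ Y` exhibits `L` as a coproduct of two objects whose injections into `L` have sections,
so any two morphisms out of `L` agree. Hence `⊥_ C ⟶ L` is epic; it is monic because the initial
object is strict, so it is an isomorphism as `C` is balanced.
-/

open CategoryTheory CategoryTheory.Limits

namespace CategoryTheory.Limits

variable {C : Type*} [Category C]

lemma isSplitEpi_pullback_snd_of_fac {X S L : C} (f : X ⟶ S) {k : L ⟶ S} [HasPullback f k]
    (g : L ⟶ X) (w : g ≫ f = k) : IsSplitEpi (pullback.snd f k) :=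
  ⟨⟨{ section_ := pullback.lift g (𝟙 L) (by simp [w]), id := pullback.lift_snd _ _ _ }⟩⟩

lemma BinaryCofan.IsColimit.hom_ext_of_epi {P Q L W : C} {a : P ⟶ L} {b : Q ⟶ L}
    (hc : IsColimit (BinaryCofan.mk a b)) [Epi a] [Epi b] (g h : L ⟶ W) : g = h := by
  let m := hc.desc (BinaryCofan.mk (a ≫ g) (b ≫ h))
  have hm_left : m = g := (cancel_epi a).1 (hc.fac _ ⟨WalkingPair.left⟩)
  have hm_right : m = h := (cancel_epi b).1 (hc.fac _ ⟨WalkingPair.right⟩)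
  exact hm_left.symm.trans hm_right

noncomputable def isInitialOfHomExt [HasInitial C] [HasStrictInitialObjects C] [Balanced C]
    {L : C} (hext : ∀ {W : C} (g h : L ⟶ W), g = h) : IsInitial L :=
  have : Epi (initial.to L) := ⟨fun g h _ => hext g h⟩
  have : IsIso (initial.to L) := isIso_of_mono_of_epi _
  initialIsInitial.ofIso (asIso (initial.to L))

end CategoryTheory.Limits

/-- In a balanced category with pullbacks, binary coproducts all of whose
coproduct cocones are stable under pullback, and a strict initial object (every morphism
into `⊥_ C` is an isomorphism), binary coproducts are disjoint: the pullback of the two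
coproduct injections `coprod.inl : X ⟶ X ⨿ Y` and `coprod.inr : Y ⟶ X ⨿ Y` is an
initial object. -/
theorem coprod_disjoint_of_balanced_stable {C : Type*} [Category C] [Balanced C]
    [HasPullbacks C] [HasBinaryCoproducts C] [HasInitial C]
    (hstable : ∀ {X Y S : C} (inl : X ⟶ S) (inr : Y ⟶ S),
      Nonempty (IsColimit (BinaryCofan.mk inl inr)) →
      ∀ {Z : C} (f : Z ⟶ S),
        Nonempty (IsColimit (BinaryCofan.mk (pullback.snd inl f) (pullback.snd inr f))))
    (hstrict : ∀ {A : C} (f : A ⟶ ⊥_ C), IsIso f)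
    (X Y : C) :
    Nonempty (IsInitial (pullback (coprod.inl : X ⟶ X ⨿ Y) (coprod.inr : Y ⟶ X ⨿ Y))) := by
  have := hasStrictInitialObjects_of_initial_is_strict fun _ f => hstrict f
  let k : pullback (coprod.inl : X ⟶ X ⨿ Y) (coprod.inr : Y ⟶ X ⨿ Y) ⟶ X ⨿ Y :=
    pullback.fst _ _ ≫ coprod.inl
  obtain ⟨hc⟩ := hstable coprod.inl coprod.inr ⟨coprodIsCoprod X Y⟩ k
  have := isSplitEpi_pullback_snd_of_fac (k := k) coprod.inl (pullback.fst _ _) rfl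
  have := isSplitEpi_pullback_snd_of_fac (k := k) coprod.inr (pullback.snd _ _)
    pullback.condition.symm
  exact ⟨isInitialOfHomExt (BinaryCofan.IsColimit.hom_ext_of_epi hc)⟩
end

section
/- Let C be a category with pullbacks, and let e : X → Y be a morphism whose kernel pair p₁, p₂ : K ⇉ X exists. Suppose the parallel pair (p₁, p₂) has a coequalizer e' : X → Y' that is stable under pullback, meaning that for every morphism g : Z → Y' all the relevant pullbacks along g exist and the fork obtained by pulling the coequalizer diagram back along g is again a coequalizer. Let e'' : Y' → Y be the unique morphism with e'' ∘ e' = e. Then e'' is a monomorphism. -/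
open CategoryTheory CategoryTheory.Limits

/-- Let `e : X ⟶ Y` have kernel pair `p₁, p₂ : pullback e e ⇉ X`, and let
`e' : X ⟶ Y'` be a coequalizer of `(p₁, p₂)` that is stable under pullback: for every
`g : Z ⟶ Y'`, pulling the coequalizer fork back along `g` (i.e. the induced parallel
pair `p₁', p₂' : (pullback e e) ×_{Y'} Z ⇉ X ×_{Y'} Z` followed by the projection
`X ×_{Y'} Z ⟶ Z`) again gives a coequalizer.  If `e'' : Y' ⟶ Y` is the factorization
with `e' ≫ e'' = e`, then `e''` is a monomorphism. -/
theorem mono_of_stable_coequalizer_of_kernelPair {C : Type*} [Category C] [HasPullbacks C]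
    {X Y Y' : C} (e : X ⟶ Y) (e' : X ⟶ Y')
    (w : pullback.fst e e ≫ e' = pullback.snd e e ≫ e')
    (hcoeq : Nonempty (IsColimit (Cofork.ofπ e' w)))
    (hstable : ∀ {Z : C} (g : Z ⟶ Y')
      (p₁' p₂' : pullback (pullback.fst e e ≫ e') g ⟶ pullback e' g),
      p₁' ≫ pullback.fst e' g =
        pullback.fst (pullback.fst e e ≫ e') g ≫ pullback.fst e e →
      p₁' ≫ pullback.snd e' g = pullback.snd (pullback.fst e e ≫ e') g →
      p₂' ≫ pullback.fst e' g =
        pullback.fst (pullback.fst e e ≫ e') g ≫ pullback.snd e e →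
      p₂' ≫ pullback.snd e' g = pullback.snd (pullback.fst e e ≫ e') g →
      ∀ (w' : p₁' ≫ pullback.snd e' g = p₂' ≫ pullback.snd e' g),
        Nonempty (IsColimit (Cofork.ofπ (pullback.snd e' g) w')))
    (e'' : Y' ⟶ Y) (he'' : e' ≫ e'' = e) :
    Mono e'' := by
  -- Step 1: every pullback of `e'` is an epimorphism.
  have hepi : ∀ {Z : C} (g : Z ⟶ Y'), Epi (pullback.snd e' g) := by
    intro Z g
    -- construct the two induced maps `p₁' p₂'`
    have w1 : (pullback.fst (pullback.fst e e ≫ e') g ≫ pullback.fst e e) ≫ e' =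
        pullback.snd (pullback.fst e e ≫ e') g ≫ g := by
      rw [Category.assoc, ← pullback.condition]
    have w2 : (pullback.fst (pullback.fst e e ≫ e') g ≫ pullback.snd e e) ≫ e' =
        pullback.snd (pullback.fst e e ≫ e') g ≫ g := by
      rw [Category.assoc, ← w, ← pullback.condition]
    set p₁' : pullback (pullback.fst e e ≫ e') g ⟶ pullback e' g :=
      pullback.lift _ _ w1 with hp1
    set p₂' : pullback (pullback.fst e e ≫ e') g ⟶ pullback e' g :=
      pullback.lift _ _ w2 with hp2
    have h1 : p₁' ≫ pullback.snd e' g = pullback.snd (pullback.fst e e ≫ e') g :=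
      pullback.lift_snd _ _ _
    have h2 : p₂' ≫ pullback.snd e' g = pullback.snd (pullback.fst e e ≫ e') g :=
      pullback.lift_snd _ _ _
    have w' : p₁' ≫ pullback.snd e' g = p₂' ≫ pullback.snd e' g := by rw [h1, h2]
    obtain ⟨hc⟩ := hstable g p₁' p₂' (pullback.lift_fst _ _ _) h1
      (pullback.lift_fst _ _ _) h2 w'
    exact epi_of_isColimit_cofork hc
  -- Step 2: the two projections of `pullback e'' e''` agree.
  have key : pullback.fst e'' e'' = pullback.snd e'' e'' := by
    set g := pullback.fst e'' e'' with hg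
    set A := pullback e' g
    set h := pullback.snd e' g ≫ pullback.snd e'' e'' with hh
    set B := pullback e' h
    have hBA : Epi (pullback.snd e' h ≫ pullback.snd e' g) := by
      haveI := hepi g; haveI := hepi h; exact epi_comp _ _
    rw [← cancel_epi (pullback.snd e' h ≫ pullback.snd e' g)]
    -- the two maps B ⟶ X
    set u : B ⟶ X := pullback.fst e' h with hu
    set v : B ⟶ X := pullback.snd e' h ≫ pullback.fst e' g with hv
    have hue : u ≫ e' = pullback.snd e' h ≫ pullback.snd e' g ≫ pullback.snd e'' e'' := by
      rw [hu, pullback.condition (f := e') (g := h)]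
    have hve : v ≫ e' = pullback.snd e' h ≫ pullback.snd e' g ≫ pullback.fst e'' e'' := by
      rw [hv, Category.assoc, pullback.condition (f := e') (g := g)]
    have huv : v ≫ e = u ≫ e := by
      rw [← he'', ← Category.assoc, ← Category.assoc, hue, hve]
      simp only [Category.assoc, pullback.condition (f := e'') (g := e'')]
    set k : B ⟶ pullback e e := pullback.lift v u huv with hk
    have k1 : k ≫ pullback.fst e e = v := pullback.lift_fst _ _ _
    have k2 : k ≫ pullback.snd e e = u := pullback.lift_snd _ _ _
    calc (pullback.snd e' h ≫ pullback.snd e' g) ≫ pullback.fst e'' e''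
        = v ≫ e' := by rw [hve, Category.assoc]
      _ = k ≫ pullback.fst e e ≫ e' := by rw [← k1, Category.assoc]
      _ = k ≫ pullback.snd e e ≫ e' := by rw [w]
      _ = u ≫ e' := by rw [← k2, Category.assoc]
      _ = (pullback.snd e' h ≫ pullback.snd e' g) ≫ pullback.snd e'' e'' := by
          rw [hue, Category.assoc]
  -- Step 3: conclude monomorphy.
  constructor
  intro Z a b hab
  have := pullback.lift_fst a b hab
  have h2 := pullback.lift_snd a b hab
  exact this.symm.trans ((congrArg (fun t => pullback.lift a b hab ≫ t) key).trans h2)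
end

section
/- Let C be a category with pullbacks, and let e : X → Y be a morphism with kernel pair p₁, p₂ : K ⇉ X, a pullback-stable coequalizer e' : X → Y' of (p₁, p₂), and induced factorization e'' : Y' → Y with e'' ∘ e' = e. Then the commutative square with top edge id_X : X → X, left edge e' : X → Y', right edge e : X → Y, and bottom edge e'' : Y' → Y is a pullback square; that is, the pullback of e along e'' is (X, e', id_X). -/
open CategoryTheory CategoryTheory.Limits

/-- With `e : X ⟶ Y`, kernel pair `p₁, p₂ : pullback e e ⇉ X`, a
pullback-stable coequalizer `e' : X ⟶ Y'` of `(p₁, p₂)`, and induced factorization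
`e'' : Y' ⟶ Y` with `e' ≫ e'' = e`, the commutative square with top edge `𝟙 X`,
left edge `e'`, right edge `e` and bottom edge `e''` is a pullback square. -/
theorem isPullback_of_stable_coequalizer_of_kernelPair {C : Type*} [Category C]
    [HasPullbacks C]
    {X Y Y' : C} (e : X ⟶ Y) (e' : X ⟶ Y')
    (w : pullback.fst e e ≫ e' = pullback.snd e e ≫ e')
    (hcoeq : Nonempty (IsColimit (Cofork.ofπ e' w)))
    (hstable : ∀ {Z : C} (g : Z ⟶ Y')
      (p₁' p₂' : pullback (pullback.fst e e ≫ e') g ⟶ pullback e' g),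
      p₁' ≫ pullback.fst e' g =
        pullback.fst (pullback.fst e e ≫ e') g ≫ pullback.fst e e →
      p₁' ≫ pullback.snd e' g = pullback.snd (pullback.fst e e ≫ e') g →
      p₂' ≫ pullback.fst e' g =
        pullback.fst (pullback.fst e e ≫ e') g ≫ pullback.snd e e →
      p₂' ≫ pullback.snd e' g = pullback.snd (pullback.fst e e ≫ e') g →
      ∀ (w' : p₁' ≫ pullback.snd e' g = p₂' ≫ pullback.snd e' g),
        Nonempty (IsColimit (Cofork.ofπ (pullback.snd e' g) w')))
    (e'' : Y' ⟶ Y) (he'' : e' ≫ e'' = e) :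
    IsPullback (𝟙 X) e' e e'' := by
  -- key lemma
  have key : ∀ {Z : C} (a : Z ⟶ X) (b : Z ⟶ Y'), a ≫ e = b ≫ e'' → a ≫ e' = b := by
    intro Z a b hab
    set f₁ := pullback.fst e' b
    set f₂ := pullback.snd e' b
    have hW : f₁ ≫ e' = f₂ ≫ b := pullback.condition
    -- f₂ is epi via stability
    have hp₁c : (pullback.fst (pullback.fst e e ≫ e') b ≫ pullback.fst e e) ≫ e' =
        pullback.snd (pullback.fst e e ≫ e') b ≫ b := by
      rw [Category.assoc]; exact pullback.condition
    have hp₂c : (pullback.fst (pullback.fst e e ≫ e') b ≫ pullback.snd e e) ≫ e' =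
        pullback.snd (pullback.fst e e ≫ e') b ≫ b := by
      rw [Category.assoc, ← w]; exact pullback.condition
    obtain ⟨hc⟩ := hstable b
      (pullback.lift _ _ hp₁c) (pullback.lift _ _ hp₂c)
      (pullback.lift_fst _ _ _) (pullback.lift_snd _ _ _)
      (pullback.lift_fst _ _ _) (pullback.lift_snd _ _ _)
      (by rw [pullback.lift_snd, pullback.lift_snd])
    have hepi : Epi f₂ := by
      constructor
      intro T u v huv
      exact Cofork.IsColimit.hom_ext hc huv
    -- kernel pair lift
    have hk : (f₂ ≫ a) ≫ e = f₁ ≫ e := by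
      rw [Category.assoc, hab, ← Category.assoc, ← hW, Category.assoc, he'']
    have hke : f₂ ≫ a ≫ e' = f₂ ≫ b := by
      have h1 := pullback.lift_fst (f₂ ≫ a) f₁ hk
      have h2 := pullback.lift_snd (f₂ ≫ a) f₁ hk
      calc f₂ ≫ a ≫ e' = (pullback.lift (f₂ ≫ a) f₁ hk ≫ pullback.fst e e) ≫ e' := by
            rw [h1, Category.assoc]
        _ = (pullback.lift (f₂ ≫ a) f₁ hk ≫ pullback.snd e e) ≫ e' := by
            rw [Category.assoc, Category.assoc, w]
        _ = f₁ ≫ e' := by rw [h2]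
        _ = f₂ ≫ b := hW
    exact (cancel_epi f₂).mp hke
  have comm : 𝟙 X ≫ e = e' ≫ e'' := by rw [Category.id_comp, he'']
  refine ⟨⟨comm⟩, ⟨PullbackCone.IsLimit.mk comm (fun s => s.fst)
    (fun s => Category.comp_id _) (fun s => key s.fst s.snd s.condition)
    (fun s m hm₁ _ => by simpa using hm₁)⟩⟩
end

section
/- Let C be a balanced category with pullbacks, and let e : X → Y be an epimorphism whose kernel pair p₁, p₂ : K ⇉ X exists and admits a coequalizer e' : X → Y' that is stable under pullback. Then the induced morphism e'' : Y' → Y with e'' ∘ e' = e is an isomorphism; consequently e is an effective (regular) epimorphism: e exhibits Y as a coequalizer of its kernel pair (p₁, p₂). -/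
/-!
Every pullback of the stable coequalizer `e'` is again a coequalizer, hence an epimorphism.
If `a, b : Z ⟶ Y'` satisfy `a ≫ e'' = b ≫ e''`, pull `e'` back along `a`, then along the
composite with `b`, to get an epimorphism `q : Q ⟶ Z` and lifts `u, v : Q ⟶ X` with
`u ≫ e' = q ≫ a`, `v ≫ e' = q ≫ b`. Then `u ≫ e = v ≫ e`, so `(u, v)` factors through the
kernel pair of `e`, which `e'` coequalizes; thus `q ≫ a = q ≫ b` and `a = b`. So `e''` is mono,
and epi because `e' ≫ e'' = e` is; balancedness makes it an isomorphism, and `e` is then a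
coequalizer of its kernel pair, as `e'` is.
-/

open CategoryTheory CategoryTheory.Limits

namespace CategoryTheory

variable {C : Type*} [Category C] [HasPullbacks C]

def CoequalizerStableUnderPullback {K X Y' : C} (f₁ f₂ : K ⟶ X) (e' : X ⟶ Y') : Prop :=
  ∀ {Z : C} (g : Z ⟶ Y') (p₁' p₂' : pullback (f₁ ≫ e') g ⟶ pullback e' g),
    p₁' ≫ pullback.fst e' g = pullback.fst (f₁ ≫ e') g ≫ f₁ →
    p₁' ≫ pullback.snd e' g = pullback.snd (f₁ ≫ e') g →
    p₂' ≫ pullback.fst e' g = pullback.fst (f₁ ≫ e') g ≫ f₂ →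
    p₂' ≫ pullback.snd e' g = pullback.snd (f₁ ≫ e') g →
    ∀ (w' : p₁' ≫ pullback.snd e' g = p₂' ≫ pullback.snd e' g),
      Nonempty (IsColimit (Cofork.ofπ (pullback.snd e' g) w'))

theorem CoequalizerStableUnderPullback.epi_pullback_snd {K X Y' Z : C} {f₁ f₂ : K ⟶ X}
    {e' : X ⟶ Y'} (hs : CoequalizerStableUnderPullback f₁ f₂ e') (w : f₁ ≫ e' = f₂ ≫ e')
    (g : Z ⟶ Y') : Epi (pullback.snd e' g) := by
  have h₁ : (pullback.fst (f₁ ≫ e') g ≫ f₁) ≫ e' = pullback.snd (f₁ ≫ e') g ≫ g := by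
    rw [Category.assoc, ← pullback.condition]
  have h₂ : (pullback.fst (f₁ ≫ e') g ≫ f₂) ≫ e' = pullback.snd (f₁ ≫ e') g ≫ g := by
    rw [Category.assoc, ← w, ← Category.assoc, h₁]
  obtain ⟨hc⟩ := hs g (pullback.lift _ _ h₁) (pullback.lift _ _ h₂)
    (pullback.lift_fst _ _ _) (pullback.lift_snd _ _ _)
    (pullback.lift_fst _ _ _) (pullback.lift_snd _ _ _)
    (by rw [pullback.lift_snd, pullback.lift_snd])
  exact epi_of_isColimit_cofork hc

theorem mono_of_epi_pullback_snd {X Y' Y : C} (e' : X ⟶ Y') (e'' : Y' ⟶ Y)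
    (hepi : ∀ {Z : C} (g : Z ⟶ Y'), Epi (pullback.snd e' g))
    (hker : ∀ {Q : C} (u v : Q ⟶ X), u ≫ e' ≫ e'' = v ≫ e' ≫ e'' → u ≫ e' = v ≫ e') :
    Mono e'' := by
  refine ⟨fun {Z} a b hab => ?_⟩
  set qa := pullback.snd e' a
  set qb := pullback.snd e' (qa ≫ b)
  have hca : pullback.fst e' a ≫ e' = qa ≫ a := pullback.condition
  have hcb : pullback.fst e' (qa ≫ b) ≫ e' = qb ≫ qa ≫ b := pullback.condition
  have hlift : (qb ≫ pullback.fst e' a) ≫ e' = pullback.fst e' (qa ≫ b) ≫ e' :=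
    hker _ _ (by simp only [Category.assoc, reassoc_of% hca, reassoc_of% hcb, hab])
  have : Epi qa := hepi a
  have : Epi qb := hepi (qa ≫ b)
  refine (cancel_epi (qb ≫ qa)).1 ?_
  simpa only [Category.assoc, hca, hcb] using hlift

end CategoryTheory

/-- In a balanced category with pullbacks, let `e : X ⟶ Y` be an
epimorphism whose kernel pair `p₁, p₂ : pullback e e ⇉ X` admits a pullback-stable
coequalizer `e' : X ⟶ Y'`.  Then the induced morphism `e'' : Y' ⟶ Y` with
`e' ≫ e'' = e` is an isomorphism; consequently `e` is an effective (regular)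
epimorphism: `e` exhibits `Y` as a coequalizer of its kernel pair. -/
theorem effective_epi_of_balanced_stable_coequalizer {C : Type*} [Category C]
    [Balanced C] [HasPullbacks C]
    {X Y Y' : C} (e : X ⟶ Y) [Epi e] (e' : X ⟶ Y')
    (w : pullback.fst e e ≫ e' = pullback.snd e e ≫ e')
    (hcoeq : Nonempty (IsColimit (Cofork.ofπ e' w)))
    (hstable : ∀ {Z : C} (g : Z ⟶ Y')
      (p₁' p₂' : pullback (pullback.fst e e ≫ e') g ⟶ pullback e' g),
      p₁' ≫ pullback.fst e' g =
        pullback.fst (pullback.fst e e ≫ e') g ≫ pullback.fst e e →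
      p₁' ≫ pullback.snd e' g = pullback.snd (pullback.fst e e ≫ e') g →
      p₂' ≫ pullback.fst e' g =
        pullback.fst (pullback.fst e e ≫ e') g ≫ pullback.snd e e →
      p₂' ≫ pullback.snd e' g = pullback.snd (pullback.fst e e ≫ e') g →
      ∀ (w' : p₁' ≫ pullback.snd e' g = p₂' ≫ pullback.snd e' g),
        Nonempty (IsColimit (Cofork.ofπ (pullback.snd e' g) w')))
    (e'' : Y' ⟶ Y) (he'' : e' ≫ e'' = e) :
    IsIso e'' ∧
      Nonempty (IsColimit (Cofork.ofπ e (pullback.condition (f := e) (g := e)))) := by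
  have hs : CoequalizerStableUnderPullback (pullback.fst e e) (pullback.snd e e) e' := hstable
  have : Mono e'' := mono_of_epi_pullback_snd e' e'' (hs.epi_pullback_snd w) fun u v huv => by
    rw [he''] at huv
    simpa only [pullback.lift_fst_assoc, pullback.lift_snd_assoc] using pullback.lift u v huv ≫= w
  have : Epi e'' := by
    have : Epi (e' ≫ e'') := he'' ▸ inferInstance
    exact epi_of_epi e' e''
  have : IsIso e'' := isIso_of_mono_of_epi e''
  obtain ⟨hc⟩ := hcoeq
  exact ⟨this, ⟨hc.ofIsoColimit (Cofork.ext (asIso e'') (by simpa using he''))⟩⟩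
end
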